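/- arXiv:2404.09247 — 2 statements merged into one kernel-verified Lean document; each statement's English description precedes it below -/
import Mathlib

section
/- Under the two-region setup, for all x > θ it holds that |F(x) − F̂(x)| ≤ min(1−α, 1−m/n)·sup_{x' > θ} |K(x') − K̂(x')| + 2·|α − m/n|; consequently sup_{x > θ} |F(x) − F̂(x)| ≤ min(1−α, 1−m/n)·sup_{x > θ} |K(x) − K̂(x)| + 2·|α − m/n|. -/
open Set

/-- Both ways of writing the difference, `(α - β)(1 - v) + (1 - α)(u - v)` and
`(α - β)(1 - u) + (1 - β)(u - v)`, have a first term of size at most `|α - β|`. -/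
lemma abs_mix_sub_mix_le {α β u v : ℝ} (hα : α ≤ 1) (hβ : β ≤ 1)
    (hu : u ∈ Icc (0 : ℝ) 1) (hv : v ∈ Icc (0 : ℝ) 1) :
    |(α + (1 - α) * u) - (β + (1 - β) * v)| ≤
      min (1 - α) (1 - β) * |u - v| + |α - β| := by
  have weight_le (w : ℝ) (hw : w ∈ Icc (0 : ℝ) 1) :
      |(α - β) * (1 - w)| ≤ |α - β| := by
    rw [abs_mul, abs_of_nonneg (sub_nonneg.2 hw.2)]
    exact mul_le_of_le_one_right (abs_nonneg _) (by linarith [hw.1])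
  have bound (γ w : ℝ) (hγ : γ ≤ 1) (hw : w ∈ Icc (0 : ℝ) 1)
      (h : (α + (1 - α) * u) - (β + (1 - β) * v) = (α - β) * (1 - w) + (1 - γ) * (u - v)) :
      |(α + (1 - α) * u) - (β + (1 - β) * v)| ≤ (1 - γ) * |u - v| + |α - β| := by
    rw [h, add_comm ((1 - γ) * _)]
    calc _ ≤ |(α - β) * (1 - w)| + |(1 - γ) * (u - v)| := abs_add_le _ _
      _ ≤ _ := by
        rw [abs_mul (1 - γ), abs_of_nonneg (sub_nonneg.2 hγ)]
        linarith [weight_le w hw]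
  rw [min_mul_of_nonneg _ _ (abs_nonneg _), ← min_add_add_right]
  exact le_min (bound α v hα hv (by ring)) (bound β u hβ hu (by ring))

lemma bddAbove_range_abs_sub_of_mem_Icc {ι : Type*} {f g : ι → ℝ}
    (hf : ∀ i, f i ∈ Icc (0 : ℝ) 1) (hg : ∀ i, g i ∈ Icc (0 : ℝ) 1) :
    BddAbove (range fun i => |f i - g i|) :=
  ⟨1, forall_mem_range.2 fun i =>
    abs_sub_le_of_nonneg_of_le (hf i).1 (hf i).2 (hg i).1 (hg i).2⟩

theorem disclosed_region_bound_general (θ α : ℝ) (hα : α ∈ Set.Ioo (0 : ℝ) 1)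
    (m n : ℕ) (hmn : m < n)
    (K Khat F Fhat : ℝ → ℝ)
    (hK : ∀ x, K x ∈ Set.Icc (0 : ℝ) 1) (hKhat : ∀ x, Khat x ∈ Set.Icc (0 : ℝ) 1)
    (hF : ∀ x ≥ θ, F x = α + (1 - α) * K x)
    (hFhat : ∀ x ≥ θ, Fhat x = (m : ℝ) / n + (((n : ℝ) - m) / n) * Khat x) :
    (∀ x > θ, |F x - Fhat x| ≤
        min (1 - α) (1 - (m : ℝ) / n) * (⨆ x' : {x' : ℝ // x' > θ}, |K x' - Khat x'|)
          + 2 * |α - (m : ℝ) / n|) ∧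
    (⨆ x : {x : ℝ // x > θ}, |F x - Fhat x|) ≤
        min (1 - α) (1 - (m : ℝ) / n) * (⨆ x : {x : ℝ // x > θ}, |K x - Khat x|)
          + 2 * |α - (m : ℝ) / n| := by
  have hn : (n : ℝ) ≠ 0 := Nat.cast_ne_zero.2 (by omega)
  have hweight : ((n : ℝ) - m) / n = 1 - (m : ℝ) / n := by rw [sub_div, div_self hn]
  have hmn' : (m : ℝ) / n ≤ 1 := (div_le_one₀ (by positivity)).2 (by exact_mod_cast hmn.le)
  have hmin : 0 ≤ min (1 - α) (1 - (m : ℝ) / n) := le_min (by linarith [hα.2]) (by linarith)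
  have pointwise : ∀ x > θ, |F x - Fhat x| ≤
      min (1 - α) (1 - (m : ℝ) / n) * (⨆ x' : {x' : ℝ // x' > θ}, |K x' - Khat x'|)
        + 2 * |α - (m : ℝ) / n| := by
    intro x hx
    have hsup : |K x - Khat x| ≤ ⨆ x' : {x' : ℝ // x' > θ}, |K x' - Khat x'| :=
      le_ciSup (f := fun x' : {x' : ℝ // x' > θ} => |K x' - Khat x'|)
        (bddAbove_range_abs_sub_of_mem_Icc (fun x' => hK x') fun x' => hKhat x') ⟨x, hx⟩
    rw [hF x hx.le, hFhat x hx.le, hweight]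
    calc _ ≤ min (1 - α) (1 - (m : ℝ) / n) * |K x - Khat x| + |α - (m : ℝ) / n| :=
          abs_mix_sub_mix_le hα.2.le hmn' (hK x) (hKhat x)
      _ ≤ _ := by gcongr; linarith [abs_nonneg (α - (m : ℝ) / n)]
  have : Nonempty {x : ℝ // x > θ} := ⟨⟨θ + 1, by linarith⟩⟩
  exact ⟨pointwise, ciSup_le fun x => pointwise x x.2⟩

/-- Disclosed-region lemma (two-region setup): for all `x > θ`,
`|F(x) − F̂(x)| ≤ min(1−α, 1−m/n) · sup_{x' > θ} |K(x') − K̂(x')| + 2·|α − m/n|`, and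
consequently the same bound holds for `sup_{x > θ} |F(x) − F̂(x)|`. -/
theorem disclosed_region_bound (θ α : ℝ) (hα : α ∈ Set.Ioo (0 : ℝ) 1)
    (m n k : ℕ) (hm : 0 < m) (hmn : m < n)
    (K Khat F Fhat : ℝ → ℝ)
    (hK : ∀ x, K x ∈ Set.Icc (0 : ℝ) 1) (hKhat : ∀ x, Khat x ∈ Set.Icc (0 : ℝ) 1)
    (hF : ∀ x ≥ θ, F x = α + (1 - α) * K x)
    (hFhat : ∀ x ≥ θ, Fhat x = (m : ℝ) / n + (((n : ℝ) - m) / n) * Khat x) :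
    (∀ x > θ, |F x - Fhat x| ≤
        min (1 - α) (1 - (m : ℝ) / n) * (⨆ x' : {x' : ℝ // x' > θ}, |K x' - Khat x'|)
          + 2 * |α - (m : ℝ) / n|) ∧
    (⨆ x : {x : ℝ // x > θ}, |F x - Fhat x|) ≤
        min (1 - α) (1 - (m : ℝ) / n) * (⨆ x : {x : ℝ // x > θ}, |K x - Khat x|)
          + 2 * |α - (m : ℝ) / n| :=
  disclosed_region_bound_general θ α hα m n hmn K Khat F Fhat hK hKhat hF hFhat
end

section
/- Let n₀, n₁ be positive integers with n = n₀ + n₁, let p₀ ∈ [0,1] and p₁ = 1 − p₀, and for y ∈ {0,1} let F^y : ℝ → [0,1] and F̂^y : ℝ → [0,1] be arbitrary functions. Define the expected risk R(θ) = p₁·F¹(θ) + p₀·(1 − F⁰(θ)) and the empirical risk R_emp(θ) = (n₁/n)·F̂¹(θ) + (n₀/n)·(1 − F̂⁰(θ)). Then for every θ̂ ∈ ℝ (in particular for any minimizer of R_emp): |R(θ̂) − R_emp(θ̂)| ≤ 3·|p₀ − n₀/n| + Σ_{y ∈ {0,1}} min(p_y, n_y/n) · sup_{θ ∈ ℝ}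 |F^y(θ) − F̂^y(θ)|. -/
/-!
Both risks are sums of two terms `weight * value` with values in `[0, 1]`. For such terms
`a u - b v = (a - b) v + a (u - v)` when `a ≤ b` (symmetrically otherwise), so
`|a u - b v| ≤ |a - b| + min a b * |u - v|`. Since `p₁ - n₁/n = -(p₀ - n₀/n)`, the two weight
errors coincide, which gives the bound with `2 * |p₀ - n₀/n|`.
-/

open Set

theorem abs_mul_sub_mul_le_abs_sub_add_min_mul {a b u v : ℝ} (ha : 0 ≤ a) (hb : 0 ≤ b)
    (hu : u ∈ Icc (0 : ℝ) 1) (hv : v ∈ Icc (0 : ℝ) 1) :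
    |a * u - b * v| ≤ |a - b| + min a b * |u - v| := by
  wlog hab : a ≤ b generalizing a b u v
  · have := this hb ha hv hu (le_of_not_ge hab)
    rwa [abs_sub_comm b, abs_sub_comm v, min_comm, abs_sub_comm] at this
  have hv_le : |v| ≤ 1 := abs_le.mpr ⟨by linarith [hv.1], hv.2⟩
  calc |a * u - b * v| = |(a - b) * v + a * (u - v)| := by ring_nf
    _ ≤ |(a - b) * v| + |a * (u - v)| := abs_add_le _ _
    _ = |a - b| * |v| + a * |u - v| := by rw [abs_mul, abs_mul, abs_of_nonneg ha]
    _ ≤ |a - b| + min a b * |u - v| := by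
        rw [min_eq_left hab]
        nlinarith [abs_nonneg (a - b)]

theorem abs_sub_le_iSup_abs_sub {α : Type*} {f g : α → ℝ} (hf : ∀ x, f x ∈ Icc (0 : ℝ) 1)
    (hg : ∀ x, g x ∈ Icc (0 : ℝ) 1) (x : α) : |f x - g x| ≤ ⨆ y, |f y - g y| := by
  refine le_ciSup (f := fun y => |f y - g y|) ⟨1, forall_mem_range.mpr fun y => ?_⟩ x
  simpa only [Real.dist_eq] using Real.dist_le_of_mem_Icc_01 (hf y) (hg y)

theorem abs_mul_sub_mul_le_abs_sub_add_min_mul_iSup {α : Type*} {a b : ℝ} (ha : 0 ≤ a)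
    (hb : 0 ≤ b) {f g : α → ℝ} (hf : ∀ x, f x ∈ Icc (0 : ℝ) 1)
    (hg : ∀ x, g x ∈ Icc (0 : ℝ) 1) (x : α) :
    |a * f x - b * g x| ≤ |a - b| + min a b * ⨆ y, |f y - g y| :=
  (abs_mul_sub_mul_le_abs_sub_add_min_mul ha hb (hf x) (hg x)).trans <| by
    gcongr
    exact abs_sub_le_iSup_abs_sub hf hg x

theorem abs_one_sub_mul_sub_le_abs_sub_add_min_mul_iSup {α : Type*} {a b : ℝ} (ha : 0 ≤ a)
    (hb : 0 ≤ b) {f g : α → ℝ} (hf : ∀ x, f x ∈ Icc (0 : ℝ) 1)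
    (hg : ∀ x, g x ∈ Icc (0 : ℝ) 1) (x : α) :
    |a * (1 - f x) - b * (1 - g x)| ≤ |a - b| + min a b * ⨆ y, |f y - g y| := by
  have hcompl : ∀ {h : α → ℝ}, (∀ x, h x ∈ Icc (0 : ℝ) 1) → ∀ x, 1 - h x ∈ Icc (0 : ℝ) 1 :=
    fun hh x => ⟨by linarith [(hh x).2], by linarith [(hh x).1]⟩
  have hsup : (⨆ y, |(1 - f y) - (1 - g y)|) = ⨆ y, |f y - g y| := by
    congr 1 with y
    rw [sub_sub_sub_cancel_left, abs_sub_comm]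
  rw [← hsup]
  exact abs_mul_sub_mul_le_abs_sub_add_min_mul_iSup ha hb (hcompl hf) (hcompl hg) x

theorem generalization_error_bound_general (n₀ n₁ n : ℕ) (h₀ : 0 < n₀)
    (hn : n = n₀ + n₁)
    (p₀ p₁ : ℝ) (hp₀ : p₀ ∈ Set.Icc (0 : ℝ) 1) (hp₁ : p₁ = 1 - p₀)
    (F0 F1 Fhat0 Fhat1 : ℝ → ℝ)
    (hF0 : ∀ x, F0 x ∈ Set.Icc (0 : ℝ) 1) (hF1 : ∀ x, F1 x ∈ Set.Icc (0 : ℝ) 1)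
    (hFhat0 : ∀ x, Fhat0 x ∈ Set.Icc (0 : ℝ) 1) (hFhat1 : ∀ x, Fhat1 x ∈ Set.Icc (0 : ℝ) 1)
    (R Remp : ℝ → ℝ)
    (hR : ∀ θ, R θ = p₁ * F1 θ + p₀ * (1 - F0 θ))
    (hRemp : ∀ θ, Remp θ = ((n₁ : ℝ) / n) * Fhat1 θ + ((n₀ : ℝ) / n) * (1 - Fhat0 θ))
    (θhat : ℝ) :
    |R θhat - Remp θhat| ≤ 3 * |p₀ - (n₀ : ℝ) / n|
      + (min p₀ ((n₀ : ℝ) / n) * (⨆ θ : ℝ, |F0 θ - Fhat0 θ|)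
        + min p₁ ((n₁ : ℝ) / n) * (⨆ θ : ℝ, |F1 θ - Fhat1 θ|)) := by
  set q₀ : ℝ := (n₀ : ℝ) / n
  set q₁ : ℝ := (n₁ : ℝ) / n
  have hn_pos : (0 : ℝ) < n := Nat.cast_pos.mpr (by omega)
  have hq_sum : q₀ + q₁ = 1 := by
    rw [← add_div, div_eq_one_iff_eq hn_pos.ne', hn, Nat.cast_add]
  have hweight_err : |p₁ - q₁| = |p₀ - q₀| := by
    rw [← abs_neg]; congr 1; linarith
  have hp₁_nonneg : 0 ≤ p₁ := by linarith [hp₀.2]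
  calc |R θhat - Remp θhat|
      = |(p₁ * F1 θhat - q₁ * Fhat1 θhat) + (p₀ * (1 - F0 θhat) - q₀ * (1 - Fhat0 θhat))| := by
        rw [hR, hRemp]; ring_nf
    _ ≤ |p₁ * F1 θhat - q₁ * Fhat1 θhat| + |p₀ * (1 - F0 θhat) - q₀ * (1 - Fhat0 θhat)| :=
        abs_add_le _ _
    _ ≤ (|p₁ - q₁| + min p₁ q₁ * ⨆ θ, |F1 θ - Fhat1 θ|)
          + (|p₀ - q₀| + min p₀ q₀ * ⨆ θ, |F0 θ - Fhat0 θ|) :=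
        add_le_add
          (abs_mul_sub_mul_le_abs_sub_add_min_mul_iSup hp₁_nonneg (by positivity) hF1 hFhat1 θhat)
          (abs_one_sub_mul_sub_le_abs_sub_add_min_mul_iSup hp₀.1 (by positivity) hF0 hFhat0 θhat)
    _ ≤ 3 * |p₀ - q₀| + (min p₀ q₀ * (⨆ θ, |F0 θ - Fhat0 θ|)
          + min p₁ q₁ * ⨆ θ, |F1 θ - Fhat1 θ|) := by
        rw [hweight_err]; linarith [abs_nonneg (p₀ - q₀)]

/-- Deterministic generalization-error inequality for a threshold classifier under 0-1
loss: the gap between the expected risk `R` and the empirical risk `R_emp` is bounded by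
three times the label-proportion estimation error plus the label-weighted CDF estimation
errors. -/
theorem generalization_error_bound (n₀ n₁ n : ℕ) (h₀ : 0 < n₀) (h₁ : 0 < n₁)
    (hn : n = n₀ + n₁)
    (p₀ p₁ : ℝ) (hp₀ : p₀ ∈ Set.Icc (0 : ℝ) 1) (hp₁ : p₁ = 1 - p₀)
    (F0 F1 Fhat0 Fhat1 : ℝ → ℝ)
    (hF0 : ∀ x, F0 x ∈ Set.Icc (0 : ℝ) 1) (hF1 : ∀ x, F1 x ∈ Set.Icc (0 : ℝ) 1)
    (hFhat0 : ∀ x, Fhat0 x ∈ Set.Icc (0 : ℝ) 1) (hFhat1 : ∀ x, Fhat1 x ∈ Set.Icc (0 : ℝ) 1)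
    (R Remp : ℝ → ℝ)
    (hR : ∀ θ, R θ = p₁ * F1 θ + p₀ * (1 - F0 θ))
    (hRemp : ∀ θ, Remp θ = ((n₁ : ℝ) / n) * Fhat1 θ + ((n₀ : ℝ) / n) * (1 - Fhat0 θ))
    (θhat : ℝ) :
    |R θhat - Remp θhat| ≤ 3 * |p₀ - (n₀ : ℝ) / n|
      + (min p₀ ((n₀ : ℝ) / n) * (⨆ θ : ℝ, |F0 θ - Fhat0 θ|)
        + min p₁ ((n₁ : ℝ) / n) * (⨆ θ : ℝ, |F1 θ - Fhat1 θ|)) :=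
  generalization_error_bound_general n₀ n₁ n h₀ hn p₀ p₁ hp₀ hp₁ F0 F1 Fhat0 Fhat1 hF0 hF1 hFhat0
    hFhat1 R Remp hR hRemp θhat
end
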